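/- arXiv:2108.12381 — 2 statements merged into one kernel-verified Lean document; each statement's English description precedes it below -/
import Mathlib

section
/- The number of clans on {1,...,n} equals the number of elements w of the hyperoctahedral group B_n (signed permutations of {1,...,n}) with w² = identity; that is, clans on {1,...,n} are in bijection with involutions (including the identity) in the Weyl group of type B_n. -/
/-- Data of a putative clan on `{1,...,n}` (encoded as `Fin n`):
signed singletons `(a, ε)` and signed pairs `(a, b)^ε`, where `true` = `+`. -/
abbrev ClanData (n : ℕ) := Finset (Fin n × Bool) × Finset (Fin n × Fin n × Bool)

/-- Number of occurrences of `i` among the numerical coordinates of `c`. -/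
def occCount {n : ℕ} (c : ClanData n) (i : Fin n) : ℕ :=
  (c.1.filter (fun p => p.1 = i)).card + (c.2.filter (fun p => p.1 = i ∨ p.2.1 = i)).card

/-- `c` is a clan: in every pair `(a,b)^ε` we have `a < b`, and every index
occurs exactly once among the coordinates. -/
def IsClan {n : ℕ} (c : ClanData n) : Prop :=
  (∀ p ∈ c.2, p.1 < p.2.1) ∧ ∀ i, occCount c i = 1

instance {n : ℕ} : DecidablePred (IsClan (n := n)) := fun c => by
  unfold IsClan; infer_instance

/-- The set of clans on `{1,...,n}`. -/
def Clan (n : ℕ) := {c : ClanData n // IsClan c}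

instance {n : ℕ} : Fintype (Clan n) := Subtype.fintype _

/-- A clan is even if the number of pairs `(a,b)^+` has the same parity as
the number of singletons bearing a `-` sign. -/
def IsEven {n : ℕ} (c : ClanData n) : Prop :=
  (c.2.filter (fun p => p.2.2 = true)).card % 2 = (c.1.filter (fun p => p.2 = false)).card % 2

instance {n : ℕ} (c : ClanData n) : Decidable (IsEven c) := by
  unfold IsEven; infer_instance

/-- Signed involution data. -/
def SInvFun (n : ℕ) := {v : Fin n → Fin n × Bool // ∀ i, v ((v i).1) = (i, (v i).2)}

noncomputable instance {n : ℕ} : Fintype (SInvFun n) := by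
  classical
  unfold SInvFun
  infer_instance

lemma vfun_invol {n : ℕ} (v : SInvFun n) :
    Function.Involutive (fun x : Fin n × Bool => ((v.1 x.1).1, x.2 == (v.1 x.1).2)) := by
  rintro ⟨i, s⟩
  simp only
  rw [v.2 i]
  simp only
  congr 1
  cases s <;> cases (v.1 i).2 <;> rfl

def permOfV {n : ℕ} (v : SInvFun n) : Equiv.Perm (Fin n × Bool) :=
  (vfun_invol v).toPerm _

lemma permOfV_apply {n : ℕ} (v : SInvFun n) (x : Fin n × Bool) :
    permOfV v x = ((v.1 x.1).1, x.2 == (v.1 x.1).2) := rfl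

def invEquiv (n : ℕ) :
    {w : Equiv.Perm (Fin n × Bool) //
        (∀ x : Fin n × Bool, w (x.1, !x.2) = ((w x).1, !(w x).2)) ∧
        ∀ x, w (w x) = x} ≃ SInvFun n where
  toFun w := ⟨fun i => w.1 (i, true), by
    intro i
    obtain ⟨h1, h2⟩ := w.2
    simp only
    rcases hp : (w.1 (i, true)) with ⟨j, t⟩
    show w.1 (j, true) = (i, t)
    have h2' := h2 (i, true)
    rw [hp] at h2'
    cases t with
    | true => exact h2'
    | false =>
        have h1' : w.1 (j, true) = ((w.1 (j, false)).1, !(w.1 (j, false)).2) := h1 (j, false)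
        rw [h2'] at h1'
        exact h1'⟩
  invFun v := ⟨permOfV v, by
    constructor
    · rintro ⟨i, s⟩
      rw [permOfV_apply, permOfV_apply]
      simp only
      congr 1
      cases s <;> cases (v.1 i).2 <;> rfl
    · exact fun x => vfun_invol v x⟩
  left_inv w := by
    apply Subtype.ext
    apply Equiv.ext
    rintro ⟨i, s⟩
    show ((w.1 (i, true)).1, s == (w.1 (i, true)).2) = w.1 (i, s)
    cases s with
    | true => simp
    | false =>
        have h1' : w.1 (i, false) = ((w.1 (i, true)).1, !(w.1 (i, true)).2) := w.2.1 (i, true)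
        rw [h1']
        simp
  right_inv v := by
    apply Subtype.ext
    funext i
    show ((v.1 i).1, true == (v.1 i).2) = v.1 i
    simp

/-- The clan associated to a signed involution function. -/
def clanOfV {n : ℕ} (v : SInvFun n) : ClanData n :=
  ((Finset.univ.filter fun i => (v.1 i).1 = i).image (fun i => (i, (v.1 i).2)),
   (Finset.univ.filter fun i => i < (v.1 i).1).image (fun i => (i, (v.1 i).1, (v.1 i).2)))

lemma isClan_clanOfV {n : ℕ} (v : SInvFun n) : IsClan (clanOfV v) := by
  constructor
  · intro p hp
    simp only [clanOfV, Finset.mem_image, Finset.mem_filter, Finset.mem_univ, true_and] at hp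
    obtain ⟨i, hi, rfl⟩ := hp
    exact hi
  · intro j
    unfold occCount
    rcases lt_trichotomy j (v.1 j).1 with h | h | h
    · have hA : (clanOfV v).1.filter (fun p => p.1 = j) = ∅ := by
        rw [Finset.eq_empty_iff_forall_notMem]
        intro p hp
        simp only [clanOfV, Finset.mem_filter, Finset.mem_image, Finset.mem_univ, true_and] at hp
        obtain ⟨⟨i, hi, rfl⟩, h1⟩ := hp
        simp only at h1
        subst h1
        exact absurd hi (ne_of_gt h)
      have hB : (clanOfV v).2.filter (fun p => p.1 = j ∨ p.2.1 = j)
          = {(j, (v.1 j).1, (v.1 j).2)} := by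
        ext p
        simp only [clanOfV, Finset.mem_filter, Finset.mem_image, Finset.mem_univ, true_and,
          Finset.mem_singleton]
        constructor
        · rintro ⟨⟨i, hlt, rfl⟩, hcase⟩
          simp only at hcase
          rcases hcase with rfl | hji
          · rfl
          · have hv := v.2 i
            rw [hji] at hv
            have h2 : (v.1 j).1 = i := by rw [hv]
            rw [h2] at h
            rw [hji] at hlt
            exact ((lt_irrefl j (h.trans hlt)).elim)
        · rintro rfl
          exact ⟨⟨j, h, rfl⟩, Or.inl rfl⟩
      rw [hA, hB]
      simp
    · have hA : (clanOfV v).1.filter (fun p => p.1 = j) = {(j, (v.1 j).2)} := by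
        ext p
        simp only [clanOfV, Finset.mem_filter, Finset.mem_image, Finset.mem_univ, true_and,
          Finset.mem_singleton]
        constructor
        · rintro ⟨⟨i, hi, rfl⟩, h1⟩
          simp only at h1
          subst h1
          rfl
        · rintro rfl
          exact ⟨⟨j, h.symm, rfl⟩, rfl⟩
      have hB : (clanOfV v).2.filter (fun p => p.1 = j ∨ p.2.1 = j) = ∅ := by
        rw [Finset.eq_empty_iff_forall_notMem]
        intro p hp
        simp only [clanOfV, Finset.mem_filter, Finset.mem_image, Finset.mem_univ, true_and] at hp
        obtain ⟨⟨i, hlt, rfl⟩, hcase⟩ := hp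
        simp only at hcase
        rcases hcase with rfl | hji
        · rw [← h] at hlt
          exact lt_irrefl _ hlt
        · have hv := v.2 i
          rw [hji] at hv
          have h2 : (v.1 j).1 = i := by rw [hv]
          rw [← h] at h2
          subst h2
          rw [hji] at hlt
          exact lt_irrefl _ hlt
      rw [hA, hB]
      simp
    · have hA : (clanOfV v).1.filter (fun p => p.1 = j) = ∅ := by
        rw [Finset.eq_empty_iff_forall_notMem]
        intro p hp
        simp only [clanOfV, Finset.mem_filter, Finset.mem_image, Finset.mem_univ, true_and] at hp
        obtain ⟨⟨i, hi, rfl⟩, h1⟩ := hp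
        simp only at h1
        subst h1
        exact absurd hi (ne_of_lt h)
      have hB : (clanOfV v).2.filter (fun p => p.1 = j ∨ p.2.1 = j)
          = {((v.1 j).1, j, (v.1 j).2)} := by
        ext p
        simp only [clanOfV, Finset.mem_filter, Finset.mem_image, Finset.mem_univ, true_and,
          Finset.mem_singleton]
        constructor
        · rintro ⟨⟨i, hlt, rfl⟩, hcase⟩
          simp only at hcase
          rcases hcase with rfl | hji
          · exact absurd hlt (not_lt.mpr h.le)
          · have hv := v.2 i
            rw [hji] at hv
            have h1 : (v.1 j).1 = i := by rw [hv]
            have h2 : (v.1 j).2 = (v.1 i).2 := by rw [hv]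
            rw [h1, h2, hji]
        · rintro rfl
          have hv := v.2 j
          have hx1 : (v.1 ((v.1 j).1)).1 = j := by rw [hv]
          have hx2 : (v.1 ((v.1 j).1)).2 = (v.1 j).2 := by rw [hv]
          refine ⟨⟨(v.1 j).1, ?_, ?_⟩, Or.inr rfl⟩
          · rw [hx1]; exact h
          · rw [hx1, hx2]
      rw [hA, hB]
      simp

lemma clanOfV_injective {n : ℕ} : Function.Injective (clanOfV (n := n)) := by
  intro v v' h
  have h1 : (clanOfV v).1 = (clanOfV v').1 := by rw [h]
  have h2 : (clanOfV v).2 = (clanOfV v').2 := by rw [h]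
  apply Subtype.ext
  funext i
  rcases lt_trichotomy i (v.1 i).1 with hlt | heq | hgt
  · have hm : (i, (v.1 i).1, (v.1 i).2) ∈ (clanOfV v).2 := by
      simp only [clanOfV, Finset.mem_image, Finset.mem_filter, Finset.mem_univ, true_and]
      exact ⟨i, hlt, rfl⟩
    rw [h2] at hm
    simp only [clanOfV, Finset.mem_image, Finset.mem_filter, Finset.mem_univ, true_and] at hm
    obtain ⟨k, hk, hkeq⟩ := hm
    rw [Prod.mk.injEq, Prod.mk.injEq] at hkeq
    obtain ⟨hk1, ha, hb⟩ := hkeq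
    rw [hk1] at ha hb
    exact (Prod.ext ha hb).symm
  · have hm : (i, (v.1 i).2) ∈ (clanOfV v).1 := by
      simp only [clanOfV, Finset.mem_image, Finset.mem_filter, Finset.mem_univ, true_and]
      exact ⟨i, heq.symm, rfl⟩
    rw [h1] at hm
    simp only [clanOfV, Finset.mem_image, Finset.mem_filter, Finset.mem_univ, true_and] at hm
    obtain ⟨k, hk, hkeq⟩ := hm
    rw [Prod.mk.injEq] at hkeq
    obtain ⟨hk1, hb⟩ := hkeq
    rw [hk1] at hk hb
    exact (Prod.ext (hk.trans heq) hb).symm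
  · have hv := v.2 i
    have hm : ((v.1 i).1, i, (v.1 i).2) ∈ (clanOfV v).2 := by
      simp only [clanOfV, Finset.mem_image, Finset.mem_filter, Finset.mem_univ, true_and]
      refine ⟨(v.1 i).1, ?_, ?_⟩
      · rw [hv]; exact hgt
      · rw [hv]
    rw [h2] at hm
    simp only [clanOfV, Finset.mem_image, Finset.mem_filter, Finset.mem_univ, true_and] at hm
    obtain ⟨k, hk, hkeq⟩ := hm
    rw [Prod.mk.injEq, Prod.mk.injEq] at hkeq
    obtain ⟨hk1, ha, hb⟩ := hkeq
    rw [hk1] at hk ha hb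
    have hv' := v'.2 ((v.1 i).1)
    rw [ha] at hv'
    rw [hb] at hv'
    rw [hv']

section Surj
variable {n : ℕ} {c : ClanData n}

lemma clan_sing_unique (hc : IsClan c) {p q : Fin n × Bool} (hp : p ∈ c.1) (hq : q ∈ c.1)
    (h : p.1 = q.1) : p = q := by
  have h1 := hc.2 p.1
  unfold occCount at h1
  have hcard : (c.1.filter (fun r => r.1 = p.1)).card ≤ 1 := by omega
  exact Finset.card_le_one.mp hcard p (Finset.mem_filter.mpr ⟨hp, rfl⟩)
    q (Finset.mem_filter.mpr ⟨hq, h.symm⟩)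

lemma clan_pair_unique (hc : IsClan c) {p q : Fin n × Fin n × Bool} {i : Fin n}
    (hp : p ∈ c.2) (hq : q ∈ c.2) (hpi : p.1 = i ∨ p.2.1 = i) (hqi : q.1 = i ∨ q.2.1 = i) :
    p = q := by
  have h1 := hc.2 i
  unfold occCount at h1
  have hcard : (c.2.filter (fun r => r.1 = i ∨ r.2.1 = i)).card ≤ 1 := by omega
  exact Finset.card_le_one.mp hcard p (Finset.mem_filter.mpr ⟨hp, hpi⟩)
    q (Finset.mem_filter.mpr ⟨hq, hqi⟩)

lemma clan_excl (hc : IsClan c) {p : Fin n × Bool} {q : Fin n × Fin n × Bool} {i : Fin n}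
    (hp : p ∈ c.1) (hq : q ∈ c.2) (h1 : p.1 = i) (h2 : q.1 = i ∨ q.2.1 = i) : False := by
  have ho := hc.2 i
  unfold occCount at ho
  have hA : 0 < (c.1.filter (fun r => r.1 = i)).card :=
    Finset.card_pos.mpr ⟨p, Finset.mem_filter.mpr ⟨hp, h1⟩⟩
  have hB : 0 < (c.2.filter (fun r => r.1 = i ∨ r.2.1 = i)).card :=
    Finset.card_pos.mpr ⟨q, Finset.mem_filter.mpr ⟨hq, h2⟩⟩
  omega

lemma clan_total (hc : IsClan c) (i : Fin n) :
    (∃ p ∈ c.1, p.1 = i) ∨ (∃ q ∈ c.2, q.1 = i ∨ q.2.1 = i) := by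
  have ho := hc.2 i
  unfold occCount at ho
  rcases Nat.eq_zero_or_pos (c.1.filter (fun r => r.1 = i)).card with h | h
  · right
    have hB : 0 < (c.2.filter (fun r => r.1 = i ∨ r.2.1 = i)).card := by omega
    obtain ⟨q, hq⟩ := Finset.card_pos.mp hB
    obtain ⟨hq1, hq2⟩ := Finset.mem_filter.mp hq
    exact ⟨q, hq1, hq2⟩
  · left
    obtain ⟨p, hp⟩ := Finset.card_pos.mp h
    obtain ⟨hp1, hp2⟩ := Finset.mem_filter.mp hp
    exact ⟨p, hp1, hp2⟩

/-- The signed involution function associated to a clan. -/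
noncomputable def vOf (c : ClanData n) (i : Fin n) : Fin n × Bool :=
  if h : ∃ p ∈ c.1, p.1 = i then (i, h.choose.2)
  else if h2 : ∃ q ∈ c.2, q.1 = i then (h2.choose.2.1, h2.choose.2.2)
  else if h3 : ∃ q ∈ c.2, q.2.1 = i then (h3.choose.1, h3.choose.2.2)
  else (i, true)

lemma vOf_sing (hc : IsClan c) {p : Fin n × Bool} (hp : p ∈ c.1) : vOf c p.1 = p := by
  have h : ∃ q ∈ c.1, q.1 = p.1 := ⟨p, hp, rfl⟩
  rw [vOf, dif_pos h]
  have hs := h.choose_spec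
  have : h.choose = p := clan_sing_unique hc hs.1 hp hs.2
  rw [this]

lemma vOf_pair1 (hc : IsClan c) {q : Fin n × Fin n × Bool} (hq : q ∈ c.2) :
    vOf c q.1 = (q.2.1, q.2.2) := by
  have hne : ¬∃ p ∈ c.1, p.1 = q.1 := by
    rintro ⟨p, hp, hp1⟩
    exact clan_excl hc hp hq hp1 (Or.inl rfl)
  have h2 : ∃ q' ∈ c.2, q'.1 = q.1 := ⟨q, hq, rfl⟩
  rw [vOf, dif_neg hne, dif_pos h2]
  have hs := h2.choose_spec
  have : h2.choose = q := clan_pair_unique hc hs.1 hq (Or.inl hs.2) (Or.inl rfl)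
  rw [this]

lemma vOf_pair2 (hc : IsClan c) {q : Fin n × Fin n × Bool} (hq : q ∈ c.2) :
    vOf c q.2.1 = (q.1, q.2.2) := by
  have hne : ¬∃ p ∈ c.1, p.1 = q.2.1 := by
    rintro ⟨p, hp, hp1⟩
    exact clan_excl hc hp hq hp1 (Or.inr rfl)
  have hne2 : ¬∃ q' ∈ c.2, q'.1 = q.2.1 := by
    rintro ⟨q', hq', hq1⟩
    have : q' = q := clan_pair_unique hc hq' hq (Or.inl hq1) (Or.inr rfl)
    subst this
    exact absurd hq1 (ne_of_lt (hc.1 q' hq'))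
  have h3 : ∃ q' ∈ c.2, q'.2.1 = q.2.1 := ⟨q, hq, rfl⟩
  rw [vOf, dif_neg hne, dif_neg hne2, dif_pos h3]
  have hs := h3.choose_spec
  have : h3.choose = q := clan_pair_unique hc hs.1 hq (Or.inr hs.2) (Or.inr rfl)
  rw [this]

lemma vOf_invol (hc : IsClan c) : ∀ i, vOf c ((vOf c i).1) = (i, (vOf c i).2) := by
  intro i
  rcases clan_total hc i with ⟨p, hp, hpi⟩ | ⟨q, hq, hqi | hqi⟩
  · subst hpi
    rw [vOf_sing hc hp, vOf_sing hc hp]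
  · subst hqi
    rw [vOf_pair1 hc hq]
    exact vOf_pair2 hc hq
  · subst hqi
    rw [vOf_pair2 hc hq]
    exact vOf_pair1 hc hq

lemma clanOfV_vOf (hc : IsClan c) : clanOfV ⟨vOf c, vOf_invol hc⟩ = c := by
  have hV : ∀ i : Fin n, vOf c ((vOf c i).1) = (i, (vOf c i).2) := vOf_invol hc
  apply Prod.ext
  · ext p
    simp only [clanOfV, Finset.mem_image, Finset.mem_filter, Finset.mem_univ, true_and]
    constructor
    · rintro ⟨i, hi, rfl⟩
      rcases clan_total hc i with ⟨p', hp', hpi⟩ | ⟨q, hq, hqi | hqi⟩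
      · subst hpi
        rw [vOf_sing hc hp'] at hi ⊢
        exact hp'
      · subst hqi
        rw [vOf_pair1 hc hq] at hi
        exact absurd hi.symm (ne_of_lt (hc.1 q hq))
      · subst hqi
        rw [vOf_pair2 hc hq] at hi
        exact absurd hi (ne_of_lt (hc.1 q hq))
    · intro hp
      refine ⟨p.1, ?_, ?_⟩
      · rw [vOf_sing hc hp]
      · rw [vOf_sing hc hp]
  · ext q
    simp only [clanOfV, Finset.mem_image, Finset.mem_filter, Finset.mem_univ, true_and]
    constructor
    · rintro ⟨i, hi, rfl⟩
      rcases clan_total hc i with ⟨p', hp', hpi⟩ | ⟨q', hq', hqi | hqi⟩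
      · subst hpi
        rw [vOf_sing hc hp'] at hi
        exact absurd hi (lt_irrefl _)
      · subst hqi
        rw [vOf_pair1 hc hq']
        exact hq'
      · subst hqi
        rw [vOf_pair2 hc hq'] at hi
        exact absurd (hi.trans (hc.1 q' hq')) (lt_irrefl _)
    · intro hq
      refine ⟨q.1, ?_, ?_⟩
      · rw [vOf_pair1 hc hq]
        exact hc.1 q hq
      · rw [vOf_pair1 hc hq]

end Surj

/-- The number of clans on `{1,...,n}` equals the number of involutions
(including the identity) in the hyperoctahedral group `B_n`, realized as the
group of permutations `w` of `{±1,...,±n}` (encoded as `Fin n × Bool`)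
satisfying `w(-x) = -w(x)`. -/
theorem card_clans_eq_card_involutions (n : ℕ) :
    Fintype.card (Clan n) =
      Fintype.card {w : Equiv.Perm (Fin n × Bool) //
        (∀ x : Fin n × Bool, w (x.1, !x.2) = ((w x).1, !(w x).2)) ∧
        ∀ x, w (w x) = x} := by
  classical
  have hbij : Function.Bijective
      (fun v : SInvFun n => (⟨clanOfV v, isClan_clanOfV v⟩ : Clan n)) := by
    constructor
    · intro v v' h
      exact clanOfV_injective (congrArg Subtype.val h)
    · rintro ⟨cd, hcd⟩
      exact ⟨⟨vOf cd, vOf_invol hcd⟩, Subtype.ext (clanOfV_vOf hcd)⟩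
  have h1 := Fintype.card_of_bijective hbij
  have h2 := Fintype.card_congr (invEquiv n)
  exact h1.symm.trans h2.symm
end

section
/- For n ≥ 2, exactly half of all clans on {1,...,n} are even; that is, the number of even clans equals the number of odd clans. -/
/-!
Fix an index `i` and reverse the sign of the singleton or pair containing it. This is an
involution on clans, and it changes the number of `+` pairs plus the number of `-` singletons
by exactly one, since `i` lies in exactly one block. Hence it exchanges even and odd clans.
-/

open Finset

namespace Finset

variable {α β : Type*}

theorem card_filter_image_of_injective [DecidableEq β] {g : α → β} (hg : g.Injective)
    (s : Finset α) (q : β → Prop) [DecidablePred q] :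
    #((s.image g).filter q) = #(s.filter fun x => q (g x)) := by
  rw [filter_image, card_image_of_injective _ hg]

theorem natCast_card_filter_of_iff_xor (s : Finset α) {p q r : α → Prop}
    [DecidablePred p] [DecidablePred q] [DecidablePred r] (hr : ∀ x, r x ↔ Xor (p x) (q x)) :
    (#(s.filter r) : ZMod 2) = #(s.filter p) + #(s.filter q) := by
  simp only [card_filter, Nat.cast_sum, Nat.cast_ite, Nat.cast_one, Nat.cast_zero,
    ← sum_add_distrib]
  refine sum_congr rfl fun x _ => ?_
  by_cases hp : p x <;> by_cases hq : q x <;> simp [hr, hp, hq, Xor, CharTwo.add_self_eq_zero]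

end Finset

namespace ClanData

variable {n : ℕ}

def flipSingleton (i : Fin n) (p : Fin n × Bool) : Fin n × Bool :=
  (p.1, if p.1 = i then !p.2 else p.2)

def flipPair (i : Fin n) (p : Fin n × Fin n × Bool) : Fin n × Fin n × Bool :=
  (p.1, p.2.1, if p.1 = i ∨ p.2.1 = i then !p.2.2 else p.2.2)

theorem flipSingleton_involutive (i : Fin n) : (flipSingleton i).Involutive := by
  rintro ⟨a, ε⟩
  by_cases h : a = i <;> simp [flipSingleton, h]

theorem flipPair_involutive (i : Fin n) : (flipPair i).Involutive := by
  rintro ⟨a, b, ε⟩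
  by_cases h : a = i ∨ b = i <;> simp [flipPair, h]

def flipSign (i : Fin n) (c : ClanData n) : ClanData n :=
  (c.1.image (flipSingleton i), c.2.image (flipPair i))

theorem flipSign_involutive (i : Fin n) : (flipSign i).Involutive := by
  intro c
  simp only [flipSign, image_image, (flipSingleton_involutive i).comp_self,
    (flipPair_involutive i).comp_self, image_id]

theorem occCount_flipSign (i j : Fin n) (c : ClanData n) :
    occCount (flipSign i c) j = occCount c j := by
  simp only [occCount, flipSign,
    card_filter_image_of_injective (flipSingleton_involutive i).injective,
    card_filter_image_of_injective (flipPair_involutive i).injective]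
  rfl

theorem isClan_flipSign (i : Fin n) {c : ClanData n} (hc : IsClan c) :
    IsClan (flipSign i c) := by
  refine ⟨?_, fun j => occCount_flipSign i j c ▸ hc.2 j⟩
  simp only [flipSign, mem_image, forall_exists_index, and_imp]
  rintro _ p hp rfl
  exact hc.1 p hp

def signParity (c : ClanData n) : ZMod 2 :=
  #(c.2.filter fun p => p.2.2 = true) + #(c.1.filter fun p => p.2 = false)

theorem isEven_iff_signParity_eq_zero (c : ClanData n) : IsEven c ↔ signParity c = 0 := by
  rw [IsEven, signParity, CharTwo.add_eq_zero, ZMod.natCast_eq_natCast_iff']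

theorem signParity_flipSign (i : Fin n) (c : ClanData n) :
    signParity (flipSign i c) = signParity c + occCount c i := by
  have hpair : ∀ p : Fin n × Fin n × Bool,
      (flipPair i p).2.2 = true ↔ Xor (p.1 = i ∨ p.2.1 = i) (p.2.2 = true) := by
    rintro ⟨a, b, ε⟩
    by_cases h : a = i ∨ b = i <;> cases ε <;> simp [flipPair, h, Xor]
  have hsingleton : ∀ p : Fin n × Bool,
      (flipSingleton i p).2 = false ↔ Xor (p.1 = i) (p.2 = false) := by
    rintro ⟨a, ε⟩
    by_cases h : a = i <;> cases ε <;> simp [flipSingleton, h, Xor]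
  simp only [signParity, flipSign, occCount,
    card_filter_image_of_injective (flipSingleton_involutive i).injective,
    card_filter_image_of_injective (flipPair_involutive i).injective,
    natCast_card_filter_of_iff_xor _ hpair, natCast_card_filter_of_iff_xor _ hsingleton,
    Nat.cast_add]
  ring

theorem isEven_flipSign_iff (i : Fin n) {c : ClanData n} (hc : IsClan c) :
    IsEven (flipSign i c) ↔ ¬IsEven c := by
  have add_one_eq_zero_iff : ∀ x : ZMod 2, x + 1 = 0 ↔ ¬x = 0 := by decide
  rw [isEven_iff_signParity_eq_zero, isEven_iff_signParity_eq_zero, signParity_flipSign,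
    hc.2 i, Nat.cast_one, add_one_eq_zero_iff]

end ClanData

def Clan.flipSign {n : ℕ} (i : Fin n) : Equiv.Perm (Clan n) :=
  Function.Involutive.toPerm (fun σ => ⟨ClanData.flipSign i σ.1, ClanData.isClan_flipSign i σ.2⟩)
    fun σ => Subtype.ext (ClanData.flipSign_involutive i σ.1)

/-- For `n ≥ 2`, exactly half of all clans on `{1,...,n}` are even: the number
of even clans equals the number of odd clans. -/
theorem card_even_clans_eq_card_odd_clans (n : ℕ) (hn : 2 ≤ n) :
    Fintype.card {σ : Clan n // IsEven σ.1} = Fintype.card {σ : Clan n // ¬ IsEven σ.1} := by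
  let i : Fin n := ⟨0, by omega⟩
  refine Fintype.card_congr (Equiv.subtypeEquiv (Clan.flipSign i) fun σ => ?_)
  exact ((ClanData.isEven_flipSign_iff i σ.2).not.trans not_not).symm
end
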